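/- Under the Lazy Set axioms A0–A2, if X ⇒ Y ⇒ Z and X is an Add event, then X < Z, Y is a Cnt¹ event, and Z is a Rem¹ event. -/

import Mathlib

/-- Event type: Add, Rem, or Contains. -/
inductive EType | add | rem | cnt
deriving DecidableEq

/-- Status of an event: 0, 1, or f (failed). -/
inductive Status | s0 | s1 | sf
deriving DecidableEq

open EType Status

/-- A Tarskian system execution satisfying the Lazy Set axioms A0–A2.
Events are typed Add/Rem/Cnt; Add and Rem events are actions (with
Begin(E) = End(E) = E) and the actions are linearly ordered by the temporal
precedence relation `lt`; Cnt events are high-level with Begin(E) < End(E);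
`γ` is defined on the Op¹ events and satisfies axioms A1 and A2. -/
structure LazySys where
  E : Type
  lt : E → E → Prop
  typ : E → EType
  χ : E → Status
  kval : E → ℕ
  Begin : E → E
  End' : E → E
  γ : E → E
  action : E → Prop
  lt_irrefl : ∀ e, ¬ lt e e
  lt_trans : ∀ a b c, lt a b → lt b c → lt a c
  act_lin : ∀ a b, action a → action b → a ≠ b → lt a b ∨ lt b a
  addRem_action : ∀ e, typ e ≠ EType.cnt →
    action e ∧ Begin e = e ∧ End' e = e
  begin_end_action : ∀ e, action (Begin e) ∧ action (End' e)
  cnt_interval : ∀ e, typ e = EType.cnt → lt (Begin e) (End' e)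
  lt_iff : ∀ a b, lt a b ↔ lt (End' a) (Begin b)
  A1 : ∀ A, χ A = Status.s1 →
    typ (γ A) = EType.add ∧ χ (γ A) = Status.s0 ∧ kval (γ A) = kval A ∧
    lt (γ A) (End' A) ∧
    ¬ ∃ R, typ R = EType.rem ∧ χ R = Status.s1 ∧ γ R = γ A ∧
      lt (γ A) R ∧ lt R A
  A2 : ∀ A B, typ A = EType.add → χ A = Status.s0 → χ B = Status.s0 →
    lt A B → kval A = kval B →
    ∃ R, typ R = EType.rem ∧ χ R = Status.s1 ∧ γ R = A ∧ lt R (End' B)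

/-- The auxiliary relation ⇒ used in the linearization proof. -/
def LazySys.arrow (S : LazySys) (X Y : S.E) : Prop :=
  (S.typ Y = EType.cnt ∧ S.χ Y = Status.s1 ∧ X = S.γ Y) ∨
  (S.typ X = EType.cnt ∧ S.χ X = Status.s1 ∧
    S.typ Y = EType.rem ∧ S.χ Y = Status.s1 ∧ S.γ Y = S.γ X) ∨
  (S.typ X = EType.rem ∧ S.χ X = Status.s1 ∧
    S.typ Y = EType.cnt ∧ S.χ Y = Status.s0 ∧
    S.kval X = S.kval Y ∧ ¬ S.lt Y X ∧ S.lt (S.γ X) Y) ∨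
  (S.typ X = EType.cnt ∧ S.χ X = Status.s0 ∧
    S.typ Y = EType.add ∧ S.χ Y = Status.s0 ∧
    S.kval X = S.kval Y ∧ ¬ S.lt Y X)

namespace LazySys

variable (S : LazySys)

theorem end_eq_self_of_typ_ne_cnt {e : S.E} (he : S.typ e ≠ cnt) : S.End' e = e :=
  (S.addRem_action e he).2.2

theorem γ_lt_self_of_typ_ne_cnt {A : S.E} (hA : S.typ A ≠ cnt) (hA1 : S.χ A = s1) :
    S.lt (S.γ A) A := by
  simpa only [S.end_eq_self_of_typ_ne_cnt hA] using (S.A1 A hA1).2.2.2.1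

theorem arrow_of_typ_eq_add {X Y : S.E} (hXY : S.arrow X Y) (hX : S.typ X = add) :
    S.typ Y = cnt ∧ S.χ Y = s1 ∧ X = S.γ Y := by
  rcases hXY with h | ⟨h, -⟩ | ⟨h, -⟩ | ⟨h, -⟩
  · exact h
  all_goals simp [h] at hX

/-- The first clause of `⇒` would make the Cnt event `Y` equal to `γ Z`, an Add event by A1. -/
theorem arrow_of_typ_eq_cnt_of_χ_eq_s1 {Y Z : S.E} (hYZ : S.arrow Y Z) (hY : S.typ Y = cnt)
    (hY1 : S.χ Y = s1) : S.typ Z = rem ∧ S.χ Z = s1 ∧ S.γ Z = S.γ Y := by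
  rcases hYZ with ⟨-, hZ1, rfl⟩ | ⟨-, -, h⟩ | ⟨h, -⟩ | ⟨-, h, -⟩
  · simp [(S.A1 Z hZ1).1] at hY
  · exact h
  · simp [h] at hY
  · simp [h] at hY1

end LazySys

/-- Under the Lazy Set axioms A0–A2, if X ⇒ Y ⇒ Z and X is an
Add event, then X < Z, Y is a Cnt¹ event, and Z is a Rem¹ event. -/
theorem stmt7 (S : LazySys) :
    ∀ X Y Z : S.E, S.arrow X Y → S.arrow Y Z → S.typ X = add →
      S.lt X Z ∧ (S.typ Y = cnt ∧ S.χ Y = s1) ∧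
        (S.typ Z = rem ∧ S.χ Z = s1) := by
  intro X Y Z hXY hYZ hX
  obtain ⟨hY, hY1, rfl⟩ := S.arrow_of_typ_eq_add hXY hX
  obtain ⟨hZ, hZ1, hγZ⟩ := S.arrow_of_typ_eq_cnt_of_χ_eq_s1 hYZ hY hY1
  have hγZ_lt : S.lt (S.γ Z) Z := S.γ_lt_self_of_typ_ne_cnt (by simp [hZ]) hZ1
  exact ⟨hγZ ▸ hγZ_lt, ⟨hY, hY1⟩, hZ, hZ1⟩
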